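/- Let (R,m) be a Noetherian local ring of dimension d and I an m-primary ideal. For any element x ∈ m, the number of minimal generators of I satisfies μ(I) ≤ λ(mI : x / mI), and λ(mI : x / mI) = λ(R/(I + xR)) + μ((I + xR)/xR), where λ denotes length and μ denotes minimal number of generators. -/

import Mathlib

open Finset IsLocalRing

/-- Length of a module: longest chain in its submodule lattice. -/
noncomputable def flen (R : Type*) [CommRing R] (M : Type*) [AddCommGroup M] [Module R M] : ℕ :=
  ((Order.krullDim (Submodule R M)).unbotD 0).toNat

/-- Length `λ(P/N)` of the subquotient of `R` by submodules `N ≤ P`. -/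
noncomputable def lenq {R : Type*} [CommRing R] (P N : Submodule R R) : ℕ :=
  flen R (↥P ⧸ (N.comap P.subtype))

/-- `x` is integral over the ideal `I`: it satisfies an equation
`x^n + a 1 * x^(n-1) + ⋯ + a n = 0` with `a i ∈ I^i`. -/
def Ideal.IsIntOver {R : Type*} [CommRing R] (I : Ideal R) (x : R) : Prop :=
  ∃ (n : ℕ) (a : ℕ → R), 0 < n ∧ (∀ i ∈ Finset.Icc 1 n, a i ∈ I ^ i) ∧
    x ^ n + ∑ i ∈ Finset.Icc 1 n, a i * x ^ (n - i) = 0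

/-- The integral closure of an ideal (the set of integral elements is an ideal,
so taking the span is harmless). -/
def Ideal.intCl {R : Type*} [CommRing R] (I : Ideal R) : Ideal R :=
  Ideal.span {x | I.IsIntOver x}

/-! Everything is finite because `R/mI` has finite length, `mI` being `m`-primary. Put
`K = mI : x`. Since `xI ⊆ mI`, we have `mI ⊆ I ⊆ K`, so `λ(I/mI) ≤ λ(K/mI)` by additivity of
length. Multiplication by `x` induces `R/K ≅ (mI + xR)/mI`, hence
`λ(K/mI) = λ(R/mI) - λ(R/K) = λ(R/(mI + xR)) = λ(R/(I + xR)) + λ((I + xR)/(mI + xR))`. -/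

section Length

variable {R : Type*} [CommRing R] {M : Type*} [AddCommGroup M] [Module R M]
  {N : Type*} [AddCommGroup N] [Module R N]

theorem flen_eq_toNat_length : flen R M = (Module.length R M).toNat := by
  rw [flen, ← Module.coe_length]
  rfl

theorem LinearEquiv.flen_eq (e : M ≃ₗ[R] N) : flen R M = flen R N := by
  rw [flen_eq_toNat_length, flen_eq_toNat_length, e.length_eq]

theorem flen_eq_flen_add_flen_quotient (hM : IsFiniteLength R M) (P : Submodule R M) :
    flen R M = flen R P + flen R (M ⧸ P) := by
  have hadd := Module.length_eq_add_of_exact P.subtype P.mkQ P.injective_subtype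
    P.mkQ_surjective (LinearMap.exact_subtype_mkQ P)
  have hfin : Module.length R P + Module.length R (M ⧸ P) ≠ ⊤ :=
    hadd ▸ Module.length_ne_top_iff.mpr hM
  rw [flen_eq_toNat_length, flen_eq_toNat_length, flen_eq_toNat_length, hadd,
    ENat.toNat_add (WithTop.add_ne_top.mp hfin).1 (WithTop.add_ne_top.mp hfin).2]

noncomputable def subquotientEquivMapMkQ (A B : Submodule R M) :
    (↥B ⧸ A.comap B.subtype) ≃ₗ[R] ↥(B.map A.mkQ) :=
  let f : ↥B →ₗ[R] M ⧸ A := A.mkQ ∘ₗ B.subtype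
  have hker : LinearMap.ker f = A.comap B.subtype := by
    rw [LinearMap.ker_comp, Submodule.ker_mkQ]
  have hrange : LinearMap.range f = B.map A.mkQ := by
    rw [LinearMap.range_comp, Submodule.range_subtype]
  (Submodule.quotEquivOfEq _ _ hker.symm).trans
    (f.quotKerEquivRange.trans (LinearEquiv.ofEq _ _ hrange))

theorem IsFiniteLength.quotient_of_le {A B : Submodule R M} (hAB : A ≤ B)
    (h : IsFiniteLength R (M ⧸ A)) : IsFiniteLength R (M ⧸ B) :=
  h.of_surjective (Submodule.factor_surjective hAB)

theorem flen_quotient_eq_lenq_add_flen_quotient {A B : Submodule R R} (hAB : A ≤ B)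
    (hA : IsFiniteLength R (R ⧸ A)) : flen R (R ⧸ A) = lenq B A + flen R (R ⧸ B) := by
  rw [flen_eq_flen_add_flen_quotient hA (B.map A.mkQ),
    LinearEquiv.flen_eq (Submodule.quotientQuotientEquivQuotient A B hAB), lenq,
    LinearEquiv.flen_eq (subquotientEquivMapMkQ A B)]

theorem lenq_sup_span_singleton (J : Ideal R) (x : R) :
    lenq (J ⊔ Ideal.span {x}) J = flen R (R ⧸ Submodule.colon J (Ideal.span {x})) := by
  let f : R →ₗ[R] R ⧸ J := J.mkQ ∘ₗ LinearMap.toSpanSingleton R R x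
  have hker : LinearMap.ker f = Submodule.colon J (Ideal.span {x}) := by
    ext r
    rw [LinearMap.ker_comp, Submodule.ker_mkQ, Submodule.mem_comap,
      Submodule.mem_colon_span_singleton]
    rfl
  have hrange : LinearMap.range f = Submodule.map J.mkQ (J ⊔ Ideal.span {x} : Ideal R) := by
    rw [LinearMap.range_comp, ← LinearMap.span_singleton_eq_range, Submodule.map_sup,
      Submodule.mkQ_map_self, bot_sup_eq]
  rw [lenq, LinearEquiv.flen_eq (subquotientEquivMapMkQ _ _), ← hrange,
    LinearEquiv.flen_eq ((Submodule.quotEquivOfEq _ _ hker).symm.trans f.quotKerEquivRange).symm]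

end Length

theorem IsLocalRing.isFiniteLength_quotient_of_radical_eq {R : Type*} [CommRing R]
    [IsLocalRing R] [IsNoetherianRing R] {A : Ideal R} (hA : A.radical = maximalIdeal R) :
    IsFiniteLength R (R ⧸ A) := by
  have hmin : maximalIdeal R ∈ A.minimalPrimes := by
    rw [← Ideal.radical_minimalPrimes, hA, Ideal.minimalPrimes_eq_subsingleton_self]
    rfl
  have := quotient_artinian_of_mem_minimalPrimes_of_isLocalRing A hmin
  have : IsArtinian R (R ⧸ A) :=
    isArtinian_of_surjective_algebraMap (Ideal.Quotient.mk_surjective (I := A))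
  exact isFiniteLength_iff_isNoetherian_isArtinian.mpr ⟨inferInstance, inferInstance⟩

/-- `μ(I)` is encoded as `λ(I/mI)` and `μ((I+xR)/xR)` as `λ((I+xR)/(mI+xR))` (Nakayama). -/
theorem stmt_2 {R : Type*} [CommRing R] [IsLocalRing R] [IsNoetherianRing R]
    (I : Ideal R) (hI : I.radical = IsLocalRing.maximalIdeal R)
    (x : R) (hx : x ∈ IsLocalRing.maximalIdeal R) :
    lenq I (IsLocalRing.maximalIdeal R * I) ≤
      lenq (Submodule.colon (IsLocalRing.maximalIdeal R * I) (Ideal.span {x}))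
        (IsLocalRing.maximalIdeal R * I) ∧
    lenq (Submodule.colon (IsLocalRing.maximalIdeal R * I) (Ideal.span {x}))
        (IsLocalRing.maximalIdeal R * I) =
      flen R (R ⧸ (I ⊔ Ideal.span {x})) +
        lenq (I ⊔ Ideal.span {x})
          (IsLocalRing.maximalIdeal R * I ⊔ Ideal.span {x}) := by
  set J : Ideal R := maximalIdeal R * I
  set L : Ideal R := Ideal.span {x}
  set K : Ideal R := Submodule.colon J L
  have hJ : IsFiniteLength R (R ⧸ J) := isFiniteLength_quotient_of_radical_eq <| by
    rw [Ideal.radical_mul, hI, (maximalIdeal.isMaximal R).isPrime.radical, inf_idem]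
  have hJI : J ≤ I := Ideal.mul_le_right
  have hJK : J ≤ K := fun r hr ↦ Submodule.mem_colon_span_singleton.mpr (J.mul_mem_right x hr)
  have hIK : I ≤ K := fun r hr ↦ Submodule.mem_colon_span_singleton.mpr <| by
    rw [smul_eq_mul, mul_comm]
    exact Ideal.mul_mem_mul hx hr
  have hJ_JL : J ≤ J ⊔ L := le_sup_left
  have hJL_IL : J ⊔ L ≤ I ⊔ L := sup_le_sup_right hJI L
  have addJI := flen_quotient_eq_lenq_add_flen_quotient hJI hJ
  have addJK := flen_quotient_eq_lenq_add_flen_quotient hJK hJ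
  have addIK := flen_quotient_eq_lenq_add_flen_quotient hIK (hJ.quotient_of_le hJI)
  have addJL := flen_quotient_eq_lenq_add_flen_quotient hJ_JL hJ
  have addJLIL := flen_quotient_eq_lenq_add_flen_quotient hJL_IL (hJ.quotient_of_le hJ_JL)
  have hJL_K : lenq (J ⊔ L) J = flen R (R ⧸ K) := lenq_sup_span_singleton J x
  exact ⟨by omega, by omega⟩
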